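/- For every odd diagram D and n, if w in Perm_n(D) = {z in S_n : D_o(z) = D} avoids the pattern 213, then w ≥ u in Bruhat order for all u in Perm_n(D); in particular Perm_n(D) contains at most one 213-avoiding permutation. -/

import Mathlib

def oddDiagram {n : ℕ} (w : Equiv.Perm (Fin n)) : Finset (Fin n × Fin n) :=
  Finset.univ.filter (fun p => (p.2 : ℕ) < (w p.1 : ℕ) ∧ (p.1 : ℕ) < (w.symm p.2 : ℕ) ∧
    (p.1 : ℕ) % 2 ≠ (w.symm p.2 : ℕ) % 2)

def invLength {n : ℕ} (w : Equiv.Perm (Fin n)) : ℕ :=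
  (Finset.univ.filter (fun p : Fin n × Fin n => p.1 < p.2 ∧ w p.2 < w p.1)).card

def bruhatLE {n : ℕ} : Equiv.Perm (Fin n) → Equiv.Perm (Fin n) → Prop :=
  Relation.ReflTransGen (fun u v => ∃ t : Equiv.Perm (Fin n), t.IsSwap ∧ v = u * t ∧ invLength u < invLength v)

def contains213 {n : ℕ} (w : Equiv.Perm (Fin n)) : Prop :=
  ∃ i h j : Fin n, i < h ∧ h < j ∧ w h < w i ∧ w i < w j

def contains312 {n : ℕ} (w : Equiv.Perm (Fin n)) : Prop :=
  ∃ i h j : Fin n, i < h ∧ h < j ∧ w h < w j ∧ w j < w i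

/-!
If `u` and `z` have the same odd diagram, each value sits in them at positions of the same
parity. To see this, walk from `z` to `u`: at the first position `i` where they differ, say `u i < z i`, the value `u i`
sits in `z` at a later position `r ≡ i (mod 2)`, and transposing positions `i` and `r` of `z`
keeps its odd diagram.

If `w` avoids 213 and `D_o(u) = D_o(w)`, then at the first position `i` where `u` and `w` differ
we must have `u i < w i`: otherwise `u i` sits in `w` at a position `p ≥ i + 2` of the parity of
`i`, and `w (i + 1)` either completes a 213 pattern with `w i` and `w p`, or gives a cell of
`D_o(w)` in column `u i` that `D_o(u)` lacks. Moving the value `w i` to position `i` of `u` is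
then a transposition that raises `u` in Bruhat order and keeps its odd diagram; iterating
reaches `w`. Uniqueness holds because the inversion number makes Bruhat order antisymmetric.
-/

open Equiv

section

variable {n : ℕ}

theorem mem_oddDiagram {u : Perm (Fin n)} {x y : Fin n} :
    (x, y) ∈ oddDiagram u ↔
      y < u x ∧ x < u.symm y ∧ (x : ℕ) % 2 ≠ (u.symm y : ℕ) % 2 := by
  simp only [oddDiagram, Finset.mem_filter, Finset.mem_univ, true_and, Fin.lt_def]

theorem mem_oddDiagram_apply {u : Perm (Fin n)} {x k : Fin n} :
    (x, u k) ∈ oddDiagram u ↔ u k < u x ∧ x < k ∧ (x : ℕ) % 2 ≠ (k : ℕ) % 2 := by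
  simp [mem_oddDiagram]

theorem oddDiagram_mul_swap_eq {u : Perm (Fin n)} {i j : Fin n} (hij : i < j)
    (hpar : (i : ℕ) % 2 = (j : ℕ) % 2) (hu : u i < u j)
    (hbetween : ∀ k, i < k → k < j → (k : ℕ) % 2 ≠ (i : ℕ) % 2 → u k < u i)
    (hgap : ∀ m, i < m → (m : ℕ) % 2 ≠ (i : ℕ) % 2 → ¬ (u i < u m ∧ u m < u j)) :
    oddDiagram (u * swap i j) = oddDiagram u := by
  ext ⟨x, y⟩
  obtain ⟨z, rfl⟩ := u.surjective y
  have hz : u z = (u * swap i j) (swap i j z) := by simp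
  rw [mem_oddDiagram_apply, hz, mem_oddDiagram_apply]
  simp only [Perm.mul_apply, swap_apply_def]
  have hbx := hbetween x
  have hgz := hgap z
  have hinj : ∀ a b : Fin n, a ≠ b → u a ≠ u b := fun a b h => u.injective.ne h
  have := hinj z i; have := hinj z j; have := hinj x i; have := hinj x j
  split_ifs <;> subst_vars <;> omega

theorem invLength_lt_mul_swap {u : Perm (Fin n)} {i j : Fin n} (hij : i < j) (hu : u i < u j) :
    invLength u < invLength (u * swap i j) := by
  classical
  let inv (w : Perm (Fin n)) :=
    Finset.univ.filter fun p : Fin n × Fin n => p.1 < p.2 ∧ w p.2 < w p.1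
  have mem_inv : ∀ w a b, (a, b) ∈ inv w ↔ a < b ∧ w b < w a := by simp [inv]
  -- among increasing pairs other than `(i, j)`, exactly these have their order reversed by
  -- `swap i j`; as `u i < u j`, inversions among them stay inversions, so `Φ` fixes them
  let mixed (p : Fin n × Fin n) : Prop := (p.1 = i ∧ p.2 < j) ∨ (i < p.1 ∧ p.2 = j)
  let Φ (p : Fin n × Fin n) : Fin n × Fin n :=
    if mixed p then p else (swap i j p.1, swap i j p.2)
  have hinj : ∀ a b : Fin n, a ≠ b → u a ≠ u b := fun a b h => u.injective.ne h
  have hΦ : ∀ p ∈ inv u, Φ p ∈ (inv (u * swap i j)).erase (i, j) := by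
    rintro ⟨a, b⟩ hp
    rw [mem_inv] at hp
    have := hinj a i; have := hinj a j; have := hinj b i; have := hinj b j
    by_cases hm : mixed (a, b) <;> simp only [Φ, hm, if_true, if_false] <;>
      simp only [mixed] at hm <;>
      simp only [Finset.mem_erase, mem_inv, Perm.mul_apply, swap_apply_def, ne_eq,
        Prod.mk.injEq] <;>
      split_ifs <;> subst_vars <;> omega
  have hΦinj : Set.InjOn Φ (inv u) := by
    rintro ⟨a, b⟩ hp ⟨c, d⟩ hq
    rw [Finset.mem_coe, mem_inv] at hp hq
    by_cases hm : mixed (a, b) <;> by_cases hm' : mixed (c, d) <;>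
      simp only [Φ, hm, hm', if_true, if_false] <;> simp only [mixed] at hm hm' <;>
      simp only [swap_apply_def, Prod.mk.injEq] <;> (try split_ifs) <;> subst_vars <;> omega
  calc invLength u = (inv u).card := rfl
    _ ≤ ((inv (u * swap i j)).erase (i, j)).card := Finset.card_le_card_of_injOn Φ hΦ hΦinj
    _ < invLength (u * swap i j) := Finset.card_erase_lt_of_mem (by simp [mem_inv, hij, hu])

theorem invLength_le_of_bruhatLE {u v : Perm (Fin n)} (h : bruhatLE u v) :
    invLength u ≤ invLength v := by
  induction h with
  | refl => exact le_rfl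
  | tail _ hstep ih =>
    obtain ⟨-, -, -, hlt⟩ := hstep
    omega

theorem bruhatLE_antisymm {u v : Perm (Fin n)} (huv : bruhatLE u v) (hvu : bruhatLE v u) :
    u = v := by
  rcases huv.cases_head with rfl | ⟨c, ⟨-, -, -, hlt⟩, hc⟩
  · rfl
  · have := invLength_le_of_bruhatLE hc
    have := invLength_le_of_bruhatLE hvu
    omega

theorem apply_lt_and_lt_symm_apply_of_oddDiagram_eq {u z : Perm (Fin n)}
    (hD : oddDiagram u = oddDiagram z) {x k : Fin n} (hk : z k < z x) (hxk : x < k)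
    (hpar : (x : ℕ) % 2 ≠ (k : ℕ) % 2) : z k < u x ∧ x < u.symm (z k) := by
  have h := mem_oddDiagram_apply.2 ⟨hk, hxk, hpar⟩
  rw [← hD, mem_oddDiagram] at h
  exact ⟨h.1, h.2.1⟩

theorem le_symm_apply_of_eqOn {u z : Perm (Fin n)} {i : Fin n} (hagree : ∀ k < i, u k = z k)
    {v : Fin n} (hv : i ≤ u.symm v) : i ≤ z.symm v := by
  by_contra! h
  have : u (z.symm v) = v := by rw [hagree _ h, apply_symm_apply]
  rw [← this, symm_apply_apply] at hv
  exact hv.not_gt h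

theorem mul_swap_symm_apply_apply_eq {u z : Perm (Fin n)} {i : Fin n}
    (hagree : ∀ k < i, u k = z k) {k : Fin n} (hk : k ≤ i) :
    (z * swap i (z.symm (u i))) k = u k := by
  have hle : i ≤ z.symm (u i) := le_symm_apply_of_eqOn hagree (by simp)
  rcases hk.lt_or_eq with hk | rfl
  · rw [Perm.mul_apply, swap_apply_of_ne_of_ne hk.ne (hk.trans_le hle).ne, hagree k hk]
  · simp

theorem eqOn_lt_succ {u z : Perm (Fin n)} {i : ℕ}
    (hagree : ∀ k : Fin n, (k : ℕ) < i → u k = z k) (hi : i < n)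
    (heq : u ⟨i, hi⟩ = z ⟨i, hi⟩) : ∀ k : Fin n, (k : ℕ) < i + 1 → u k = z k := by
  intro k hk
  rcases Nat.lt_succ_iff_lt_or_eq.1 hk with hk | hk
  · exact hagree k hk
  · obtain rfl : k = ⟨i, hi⟩ := Fin.ext hk
    exact heq

theorem symm_mul_swap_apply_mod_two {z : Perm (Fin n)} {i r : Fin n}
    (hpar : (i : ℕ) % 2 = (r : ℕ) % 2) (v : Fin n) :
    ((z * swap i r).symm v : ℕ) % 2 = (z.symm v : ℕ) % 2 := by
  rw [Perm.mul_def, symm_trans_apply, symm_swap, swap_apply_def]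
  split_ifs <;> subst_vars <;> omega

theorem oddDiagram_mul_swap_symm_apply_right_eq {u z : Perm (Fin n)}
    (hD : oddDiagram u = oddDiagram z)
    {i : Fin n} (hagree : ∀ k < i, u k = z k) (hlt : u i < z i) :
    i < z.symm (u i) ∧ (i : ℕ) % 2 = (z.symm (u i) : ℕ) % 2 ∧
      oddDiagram (z * swap i (z.symm (u i))) = oddDiagram z := by
  set r := z.symm (u i)
  have hzr : z r = u i := z.apply_symm_apply _
  have hir : i < r := (le_symm_apply_of_eqOn hagree (by simp)).lt_of_ne fun h =>
    hlt.ne' ((congrArg z h).trans hzr)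
  have hpar : (i : ℕ) % 2 = (r : ℕ) % 2 := by
    by_contra h
    have := (apply_lt_and_lt_symm_apply_of_oddDiagram_eq hD (hzr ▸ hlt) hir h).1
    exact (hzr ▸ this).false
  refine ⟨hir, hpar, ?_⟩
  set z' := z * swap i r
  have hz : z' * swap i r = z := by simp [z', mul_assoc]
  have hz'i : z' i = u i := by simp [z', hzr]
  have hz'r : z' r = z i := by simp [z']
  have hz'k : ∀ k, k ≠ i → k ≠ r → z' k = z k := fun k h1 h2 => by
    simp [z', swap_apply_of_ne_of_ne h1 h2]
  refine hz ▸ (oddDiagram_mul_swap_eq hir hpar (by rwa [hz'i, hz'r]) ?_ ?_).symm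
  · intro k hik hkr hkpar
    rw [hz'k k hik.ne' hkr.ne, hz'i]
    by_contra! hge
    have hne : z k ≠ z r := fun h => hkr.ne (z.injective h)
    have := (apply_lt_and_lt_symm_apply_of_oddDiagram_eq hD
      (lt_of_le_of_ne (hzr ▸ hge) hne.symm) hkr (by omega)).2
    rw [hzr, symm_apply_apply] at this
    exact this.not_gt hik
  · rintro m him hmpar ⟨h1, h2⟩
    have hmr : m ≠ r := by rintro rfl; omega
    rw [hz'k m him.ne' hmr, hz'i] at h1
    rw [hz'k m him.ne' hmr, hz'r] at h2
    exact h1.not_gt (apply_lt_and_lt_symm_apply_of_oddDiagram_eq hD h2 him (Ne.symm hmpar)).1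

theorem symm_apply_mod_two_eq_of_eqOn {u z : Perm (Fin n)} (hD : oddDiagram u = oddDiagram z)
    (i : ℕ) (hagree : ∀ k : Fin n, (k : ℕ) < i → u k = z k) (v : Fin n) :
    (u.symm v : ℕ) % 2 = (z.symm v : ℕ) % 2 := by
  by_cases hi : i < n
  · set i' : Fin n := ⟨i, hi⟩
    have hagree' : ∀ k < i', u k = z k := hagree
    rcases lt_trichotomy (u i') (z i') with hlt | heq | hgt
    · obtain ⟨-, hpar, hD'⟩ := oddDiagram_mul_swap_symm_apply_right_eq hD hagree' hlt
      rw [symm_apply_mod_two_eq_of_eqOn (hD.trans hD'.symm) (i + 1)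
        (fun k hk => (mul_swap_symm_apply_apply_eq hagree' (Nat.lt_succ_iff.1 hk)).symm) v,
        symm_mul_swap_apply_mod_two hpar]
    · exact symm_apply_mod_two_eq_of_eqOn hD (i + 1) (eqOn_lt_succ hagree hi heq) v
    · obtain ⟨-, hpar, hD'⟩ :=
        oddDiagram_mul_swap_symm_apply_right_eq hD.symm (fun k hk => (hagree' k hk).symm) hgt
      rw [← symm_apply_mod_two_eq_of_eqOn (hD'.trans hD) (i + 1)
        (fun k hk => mul_swap_symm_apply_apply_eq (fun k hk => (hagree' k hk).symm)
          (Nat.lt_succ_iff.1 hk)) v, symm_mul_swap_apply_mod_two hpar]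
  · rw [show u = z from Equiv.ext fun k => hagree k (by omega)]
termination_by n - i

theorem symm_apply_mod_two_eq {u z : Perm (Fin n)} (hD : oddDiagram u = oddDiagram z)
    (v : Fin n) : (u.symm v : ℕ) % 2 = (z.symm v : ℕ) % 2 :=
  symm_apply_mod_two_eq_of_eqOn hD 0 (fun _ h => absurd h (Nat.not_lt_zero _)) v

theorem apply_lt_apply_of_apply_lt {u z : Perm (Fin n)} (hD : oddDiagram u = oddDiagram z)
    {i k : Fin n} (hagree : ∀ j < i, u j = z j) (hik : i ≤ k)
    (hpar : (k : ℕ) % 2 ≠ (i : ℕ) % 2) (hk : u k < z i) : u k < u i := by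
  set m := z.symm (u k)
  have hzm : z m = u k := z.apply_symm_apply _
  have hmpar : (m : ℕ) % 2 = (k : ℕ) % 2 := by
    simpa using (symm_apply_mod_two_eq hD (u k)).symm
  have him : i < m := (le_symm_apply_of_eqOn hagree (by simpa using hik)).lt_of_ne fun h =>
    hpar (hmpar.symm.trans (congrArg (fun x : Fin n => (x : ℕ) % 2) h.symm))
  simpa [hzm] using (apply_lt_and_lt_symm_apply_of_oddDiagram_eq hD (hzm ▸ hk) him (by omega)).1

theorem oddDiagram_mul_swap_symm_apply_left_eq {u z : Perm (Fin n)}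
    (hD : oddDiagram u = oddDiagram z) {i : Fin n} (hagree : ∀ k < i, u k = z k)
    (hlt : u i < z i) :
    i < u.symm (z i) ∧ oddDiagram (u * swap i (u.symm (z i))) = oddDiagram u := by
  set q := u.symm (z i)
  have huq : u q = z i := u.apply_symm_apply _
  have hqpar : (i : ℕ) % 2 = (q : ℕ) % 2 := by
    simpa using (symm_apply_mod_two_eq hD (z i)).symm
  have hiq : i < q := (le_symm_apply_of_eqOn (fun k hk => (hagree k hk).symm) (by simp)).lt_of_ne
    fun h => hlt.ne ((congrArg u h).trans huq)
  refine ⟨hiq, oddDiagram_mul_swap_eq hiq hqpar (huq ▸ hlt) ?_ ?_⟩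
  · intro k hik hkq hkpar
    by_contra! hge
    have hkq' : u k ≠ u q := fun h => hkq.ne (u.injective h)
    rcases lt_or_gt_of_ne (huq ▸ hkq') with h | h
    · exact hge.not_gt (apply_lt_apply_of_apply_lt hD hagree hik.le hkpar h)
    · have := (apply_lt_and_lt_symm_apply_of_oddDiagram_eq hD.symm (huq ▸ h) hkq (by omega)).2
      rw [huq, symm_apply_apply] at this
      exact this.not_gt hik
  · rintro m him hmpar ⟨h1, h2⟩
    exact h1.not_gt (apply_lt_apply_of_apply_lt hD hagree him.le hmpar (huq ▸ h2))

theorem apply_lt_apply_of_not_contains213 {u w : Perm (Fin n)} (hw : ¬ contains213 w)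
    (hD : oddDiagram u = oddDiagram w) {i : Fin n} (hagree : ∀ k < i, u k = w k)
    (hne : u i ≠ w i) : u i < w i := by
  by_contra! hle
  set p := w.symm (u i)
  have hwp : w p = u i := w.apply_symm_apply _
  have hppar : (p : ℕ) % 2 = (i : ℕ) % 2 := by simpa using (symm_apply_mod_two_eq hD (u i)).symm
  have hip : i < p := (le_symm_apply_of_eqOn hagree (by simp)).lt_of_ne
    fun h => hne ((congrArg w h).trans hwp).symm
  -- `p > i` has the parity of `i`, so `i + 1` lies strictly between them with the other parity
  set k : Fin n := ⟨i + 1, by omega⟩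
  have hik : i < k := Fin.lt_def.2 (Nat.lt_succ_self _)
  have hkp : k < p := Fin.lt_def.2 (show (i : ℕ) + 1 < p by omega)
  have hkpar : (k : ℕ) % 2 ≠ (i : ℕ) % 2 := show ((i : ℕ) + 1) % 2 ≠ _ by omega
  have hwk : w k ≠ w p := fun h => hkp.ne (w.injective h)
  rcases lt_or_gt_of_ne hwk with h | h
  · have hki := apply_lt_apply_of_apply_lt hD.symm (fun j hj => (hagree j hj).symm) hik.le hkpar
      (hwp ▸ h)
    exact hw ⟨i, k, p, hik, hkp, hki, hwp ▸ lt_of_le_of_ne hle (Ne.symm hne)⟩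
  · have := (apply_lt_and_lt_symm_apply_of_oddDiagram_eq hD h hkp (by omega)).2
    rw [hwp, symm_apply_apply] at this
    exact this.not_gt hik

theorem bruhatLE_of_oddDiagram_eq_of_eqOn {u w : Perm (Fin n)} (hw : ¬ contains213 w)
    (hD : oddDiagram u = oddDiagram w) (i : ℕ)
    (hagree : ∀ k : Fin n, (k : ℕ) < i → u k = w k) : bruhatLE u w := by
  by_cases hi : i < n
  · set i' : Fin n := ⟨i, hi⟩
    have hagree' : ∀ k < i', u k = w k := hagree
    by_cases heq : u i' = w i'
    · exact bruhatLE_of_oddDiagram_eq_of_eqOn hw hD (i + 1) (eqOn_lt_succ hagree hi heq)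
    · have hlt := apply_lt_apply_of_not_contains213 hw hD hagree' heq
      obtain ⟨hiq, hD'⟩ := oddDiagram_mul_swap_symm_apply_left_eq hD hagree' hlt
      refine .head ⟨_, Perm.swap_isSwap_iff.2 hiq.ne, rfl,
        invLength_lt_mul_swap hiq (by simpa using hlt)⟩
        (bruhatLE_of_oddDiagram_eq_of_eqOn hw (hD'.trans hD) (i + 1) fun k hk => ?_)
      exact mul_swap_symm_apply_apply_eq (fun k hk => (hagree' k hk).symm) (Nat.lt_succ_iff.1 hk)
  · obtain rfl : u = w := Equiv.ext fun k => hagree k (by omega)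
    exact .refl
termination_by n - i

theorem bruhatLE_of_oddDiagram_eq {u w : Perm (Fin n)} (hw : ¬ contains213 w)
    (hD : oddDiagram u = oddDiagram w) : bruhatLE u w :=
  bruhatLE_of_oddDiagram_eq_of_eqOn hw hD 0 fun _ h => absurd h (Nat.not_lt_zero _)

end

theorem stmt10 {n : ℕ} (w : Equiv.Perm (Fin n)) (hw : ¬ contains213 w) :
    (∀ u : Equiv.Perm (Fin n), oddDiagram u = oddDiagram w → bruhatLE u w) ∧
      (∀ w' : Equiv.Perm (Fin n), ¬ contains213 w' → oddDiagram w' = oddDiagram w → w' = w) := by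
  refine ⟨fun u hD => bruhatLE_of_oddDiagram_eq hw hD, fun w' hw' hD => ?_⟩
  exact bruhatLE_antisymm (bruhatLE_of_oddDiagram_eq hw hD) (bruhatLE_of_oddDiagram_eq hw' hD.symm)
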